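/- arXiv:1404.6781 — 4 statements merged into one kernel-verified Lean document; each statement's English description precedes it below -/
import Mathlib

section
/- If a set of rules R is a generating set of a logic program P and S = head(R) is consistent, then R equals the set of rules of P whose positive body is contained in S and whose negative body is disjoint from S. -/
/-- A literal over atoms `A`: `(true, a)` is the atom `a`, `(false, a)` is `¬ a`. -/
abbrev Lit (A : Type) := Bool × A

/-- A rule with head, positive body and negative body. -/
structure Rule (A : Type) where
  head : Lit A
  pos : Set (Lit A)
  neg : Set (Lit A)

variable {A : Type}

/-- Heads of a set of rules. -/
def headSet (R : Set (Rule A)) : Set (Lit A) := Rule.head '' R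

/-- `R ⊆ P` positively satisfies `P`. -/
def PosSat (P R : Set (Rule A)) : Prop :=
  R ⊆ P ∧ ∀ r ∈ P, r.pos ⊆ headSet R → r ∈ R

/-- The minimal set of rules positively satisfying `P`. -/
def MP (P : Set (Rule A)) : Set (Rule A) := ⋂₀ {R | PosSat P R}

/-- A set of rules defeats a rule. -/
def defeatsRule (R : Set (Rule A)) (r : Rule A) : Prop :=
  (headSet R ∩ r.neg).Nonempty

/-- A set of rules defeats a set of rules. -/
def defeatsSet (R₁ R₂ : Set (Rule A)) : Prop := ∃ r ∈ R₂, defeatsRule R₁ r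

/-- The reduct `P^R` removes each rule defeated by `R`. -/
def reduct (P R : Set (Rule A)) : Set (Rule A) := {r ∈ P | ¬ defeatsRule R r}

/-- `R ⊆ P` is a generating set of `P` iff `R = MP (P^R)`. -/
def GenSet (P R : Set (Rule A)) : Prop := R ⊆ P ∧ R = MP (reduct P R)

/-- A set of literals is consistent iff it contains no complementary pair. -/
def Consistent (S : Set (Lit A)) : Prop :=
  ∀ a : A, ¬ (((true, a) ∈ S) ∧ ((false, a) ∈ S))

/-- Answer sets via generating sets. -/
def AnswerSet (P : Set (Rule A)) (S : Set (Lit A)) : Prop :=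
  Consistent S ∧ ∃ R, GenSet P R ∧ headSet R = S

/-- `Γ_S(P)`: rules whose positive body is in `S` and negative body disjoint from `S`. -/
def Gamma (S : Set (Lit A)) (P : Set (Rule A)) : Set (Rule A) :=
  {r ∈ P | r.pos ⊆ S ∧ r.neg ∩ S = ∅}

/-- Fragments of a program. -/
def Frag (P : Set (Rule A)) : Set (Set (Rule A)) := {R | R ⊆ P ∧ MP R = R}

/-- Fragment reduct: remove fragments defeated by a member of `E`. -/
def fragReduct (P : Set (Rule A)) (E : Set (Set (Rule A))) : Set (Set (Rule A)) :=
  {X ∈ Frag P | ¬ ∃ Y ∈ E, defeatsSet Y X}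

/-- Stable fragment sets. -/
def StableFragSet (P : Set (Rule A)) (E : Set (Set (Rule A))) : Prop :=
  E ⊆ Frag P ∧ fragReduct P E = E

/-- Mutually defeating (conflicting) sets of rules. -/
def Conflicting (X Y : Set (Rule A)) : Prop := defeatsSet X Y ∧ defeatsSet Y X

/-- `X` overrides `Y` w.r.t. the preference relation `lt`. -/
def Overrides (lt : Rule A → Rule A → Prop) (X Y : Set (Rule A)) : Prop :=
  Conflicting X Y ∧
    ∀ r₁ ∈ X, defeatsRule Y r₁ → ∃ r₂ ∈ Y, defeatsRule X r₂ ∧ lt r₂ r₁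

/-- Preferred fragment reduct (semantics G). -/
def prefFragReduct (lt : Rule A → Rule A → Prop) (P : Set (Rule A))
    (E : Set (Set (Rule A))) : Set (Set (Rule A)) :=
  {X ∈ Frag P | ¬ ∃ Y ∈ E, defeatsSet Y X ∧ ¬ Overrides lt X Y}

/-- Preferred stable fragment sets (semantics G). -/
def PrefStableFragSet (lt : Rule A → Rule A → Prop) (P : Set (Rule A))
    (E : Set (Set (Rule A))) : Prop :=
  E ⊆ Frag P ∧ prefFragReduct lt P E = E

/-- Preferred answer sets under the fragment-based semantics G. -/
def GPrefAnswerSet (lt : Rule A → Rule A → Prop) (P : Set (Rule A))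
    (S : Set (Lit A)) : Prop :=
  Consistent S ∧ ∃ E, PrefStableFragSet lt P E ∧ headSet (⋃₀ E) = S

/-- `T(r,R)` for semantics GNO. -/
def Trules (lt : Rule A → Rule A → Prop) (r : Rule A) (R : Set (Rule A)) :
    Set (Rule A) :=
  MP {p ∈ R | ¬ lt p r}

/-- GNO reduct: remove rules `r` with `body⁻(r) ∩ head(T(r,R)) ≠ ∅`. -/
def gnoReduct (lt : Rule A → Rule A → Prop) (P R : Set (Rule A)) : Set (Rule A) :=
  {r ∈ P | ¬ (r.neg ∩ headSet (Trules lt r R)).Nonempty}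

/-- GNO-preferred generating sets. -/
def GNOPrefGen (lt : Rule A → Rule A → Prop) (P R : Set (Rule A)) : Prop :=
  GenSet P R ∧ R = MP (gnoReduct lt P R)

/-- GNO-preferred answer sets. -/
def GNOPrefAnswerSet (lt : Rule A → Rule A → Prop) (P : Set (Rule A))
    (S : Set (Lit A)) : Prop :=
  Consistent S ∧ ∃ R, GNOPrefGen lt P R ∧ headSet R = S

/-- A rule defeats a rule. -/
def defeats (r₁ r₂ : Rule A) : Prop := r₁.head ∈ r₂.neg

/-- `r₁` directly overrides `r₂` w.r.t. `lt`. -/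
def DirOverrides (lt : Rule A → Rule A → Prop) (r₁ r₂ : Rule A) : Prop :=
  (defeats r₁ r₂ ∧ defeats r₂ r₁) ∧ lt r₂ r₁

/-- D-reduct for the direct-conflict semantics. -/
def dReduct (lt : Rule A → Rule A → Prop) (P R : Set (Rule A)) : Set (Rule A) :=
  {r₁ ∈ P | ¬ ∃ r₂ ∈ R, defeats r₂ r₁ ∧ ¬ DirOverrides lt r₁ r₂}

/-- D-preferred generating sets. -/
def DPrefGen (lt : Rule A → Rule A → Prop) (P R : Set (Rule A)) : Prop :=
  R = MP (dReduct lt P R)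

/-- D-preferred answer sets. -/
def DPrefAnswerSet (lt : Rule A → Rule A → Prop) (P : Set (Rule A))
    (S : Set (Lit A)) : Prop :=
  Consistent S ∧ ∃ R, DPrefGen lt P R ∧ headSet R = S

/-- Stratified programs. -/
def Stratified (P : Set (Rule A)) : Prop :=
  ∃ lam : Lit A → ℕ, ∀ r ∈ P,
    (∀ l ∈ r.pos, lam l ≤ lam r.head) ∧ (∀ l ∈ r.neg, lam l < lam r.head)

/-! A rule belongs to `MP Q` exactly when it is in `Q` and its positive body is derived by
`MP Q`, and a rule survives the reduct `P^R` exactly when its negative body misses `head(R)`.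
For a generating set, `MP (P^R) = R`, so these two descriptions combine to `Γ_{head(R)}(P)`. -/

lemma headSet_mono {R T : Set (Rule A)} (h : R ⊆ T) : headSet R ⊆ headSet T :=
  Set.image_mono h

lemma posSat_self (Q : Set (Rule A)) : PosSat Q Q :=
  ⟨subset_rfl, fun _ hr _ => hr⟩

lemma MP_subset_of_posSat {Q R : Set (Rule A)} (h : PosSat Q R) : MP Q ⊆ R :=
  Set.sInter_subset_of_mem h

lemma posSat_MP (Q : Set (Rule A)) : PosSat Q (MP Q) := by
  refine ⟨MP_subset_of_posSat (posSat_self Q), fun r hr hpos T hT => ?_⟩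
  exact hT.2 r hr (hpos.trans (headSet_mono (MP_subset_of_posSat hT)))

lemma pos_subset_headSet_MP {Q : Set (Rule A)} {r : Rule A} (hr : r ∈ MP Q) :
    r.pos ⊆ headSet (MP Q) := by
  set S := {r ∈ MP Q | r.pos ⊆ headSet (MP Q)}
  have hS : PosSat Q S := by
    have hheads : headSet S ⊆ headSet (MP Q) := headSet_mono fun _ hx => hx.1
    refine ⟨fun x hx => (posSat_MP Q).1 hx.1, fun x hx hpos => ?_⟩
    exact ⟨(posSat_MP Q).2 x hx (hpos.trans hheads), hpos.trans hheads⟩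
  exact (MP_subset_of_posSat hS hr).2

lemma mem_MP_iff {Q : Set (Rule A)} {r : Rule A} :
    r ∈ MP Q ↔ r ∈ Q ∧ r.pos ⊆ headSet (MP Q) :=
  ⟨fun hr => ⟨(posSat_MP Q).1 hr, pos_subset_headSet_MP hr⟩,
    fun ⟨hr, hpos⟩ => (posSat_MP Q).2 r hr hpos⟩

lemma mem_reduct_iff {P R : Set (Rule A)} {r : Rule A} :
    r ∈ reduct P R ↔ r ∈ P ∧ r.neg ∩ headSet R = ∅ := by
  simp only [reduct, defeatsRule, Set.mem_ofPred_eq, Set.not_nonempty_iff_eq_empty,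
    Set.inter_comm]

theorem generating_set_eq_gamma_general (P R : Set (Rule A))
    (hgen : GenSet P R) :
    R = Gamma (headSet R) P := by
  have hR : R = MP (reduct P R) := hgen.2
  ext r
  calc r ∈ R ↔ r ∈ MP (reduct P R) := by rw [← hR]
    _ ↔ r ∈ reduct P R ∧ r.pos ⊆ headSet R := by rw [mem_MP_iff, ← hR]
    _ ↔ r ∈ Gamma (headSet R) P := by
      rw [mem_reduct_iff, Gamma, Set.mem_ofPred_eq]
      tauto

/-- if `R` is a generating set of `P` and `S = head(R)` is consistent,
then `R = Γ_S(P)`. -/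
theorem generating_set_eq_gamma (P R : Set (Rule A)) (hP : P.Finite)
    (hgen : GenSet P R) (hcons : Consistent (headSet R)) :
    R = Gamma (headSet R) P :=
  generating_set_eq_gamma_general P R hgen
end

section
/- For fragments X, Y of a logic program with preference relation <, if X overrides Y w.r.t. <, then Y does not override X w.r.t. <. -/
variable {A : Type}

/-! If `X` and `Y` override each other, every rule of `X` defeated by `Y` is undercut by a
`lt`-smaller rule of `Y` defeated by `X`, and vice versa. The rules involved therefore form a
nonempty subset of the finite program `P` without a `lt`-minimal element, which is impossible
for a strict order. -/

theorem Set.Finite.exists_forall_not_rel {α : Type*} {r : α → α → Prop} [IsStrictOrder α r]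
    {s : Set α} (hs : s.Finite) (hne : s.Nonempty) : ∃ a ∈ s, ∀ b ∈ s, ¬ r b a := by
  obtain ⟨⟨a, ha⟩, -, hmin⟩ := (hs.wellFoundedOn (r := r)).has_min Set.univ
    ⟨⟨hne.some, hne.some_mem⟩, trivial⟩
  exact ⟨a, ha, fun b hb => hmin ⟨b, hb⟩ trivial⟩

def defeatedBy (X Y : Set (Rule A)) : Set (Rule A) := {r ∈ X | defeatsRule Y r}

theorem Conflicting.defeatedBy_nonempty {X Y : Set (Rule A)} (h : Conflicting X Y) :
    (defeatedBy X Y).Nonempty :=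
  h.2

theorem Overrides.exists_lt {lt : Rule A → Rule A → Prop} {X Y : Set (Rule A)}
    (h : Overrides lt X Y) {r : Rule A} (hr : r ∈ defeatedBy X Y) :
    ∃ r' ∈ defeatedBy Y X, lt r' r := by
  obtain ⟨r', hr'Y, hr'X, hlt⟩ := h.2 r hr.1 hr.2
  exact ⟨r', ⟨hr'Y, hr'X⟩, hlt⟩

/-- overriding between fragments is asymmetric. -/
theorem overrides_asymm (P : Set (Rule A)) (hP : P.Finite)
    (lt : Rule A → Rule A → Prop) (htrans : Transitive lt)
    (hasymm : ∀ r₁ r₂, lt r₁ r₂ → ¬ lt r₂ r₁)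
    (X Y : Set (Rule A)) (hX : X ∈ Frag P) (hY : Y ∈ Frag P)
    (h : Overrides lt X Y) : ¬ Overrides lt Y X := by
  intro h'
  have : IsStrictOrder (Rule A) lt :=
    { irrefl := fun r hr => hasymm r r hr hr
      trans := fun _ _ _ => @htrans _ _ _ }
  set S := defeatedBy X Y ∪ defeatedBy Y X
  have hSfin : S.Finite :=
    hP.subset (Set.union_subset ((Set.sep_subset _ _).trans hX.1)
      ((Set.sep_subset _ _).trans hY.1))
  have hdescent : ∀ r ∈ S, ∃ r' ∈ S, lt r' r := by
    rintro r (hr | hr)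
    · obtain ⟨r', hr', hlt⟩ := h.exists_lt hr
      exact ⟨r', Or.inr hr', hlt⟩
    · obtain ⟨r', hr', hlt⟩ := h'.exists_lt hr
      exact ⟨r', Or.inl hr', hlt⟩
  obtain ⟨m, hmS, hmin⟩ :=
    hSfin.exists_forall_not_rel (r := lt) (h.1.defeatedBy_nonempty.mono Set.subset_union_left)
  obtain ⟨r', hr'S, hlt⟩ := hdescent m hmS
  exact hmin r' hr'S hlt
end

section
/- Every preferred stable fragment set of a logic program with preferences (P,<) is a stable fragment set of P. -/
variable {A : Type}

/-! If two members `X`, `Y` of a preferred stable fragment set were in conflict, each would have to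
override the other. Then every rule of `X` defeated by `Y` has a `<`-smaller rule of `Y` defeated by
`X`, and vice versa, producing an infinite descending `<`-chain among the finitely many rules of
`P`, which is impossible for a strict order. So no member of `E` defeats another, and the two
reducts agree on `E`. -/

theorem fragReduct_subset_prefFragReduct (lt : Rule A → Rule A → Prop) (P : Set (Rule A))
    (E : Set (Set (Rule A))) : fragReduct P E ⊆ prefFragReduct lt P E :=
  fun _ ⟨hX, hnd⟩ => ⟨hX, fun ⟨Y, hY, hYX, _⟩ => hnd ⟨Y, hY, hYX⟩⟩

theorem PrefStableFragSet.overrides_of_defeatsSet {lt : Rule A → Rule A → Prop}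
    {P X Y : Set (Rule A)} {E : Set (Set (Rule A))} (h : PrefStableFragSet lt P E)
    (hX : X ∈ E) (hY : Y ∈ E) (hYX : defeatsSet Y X) : Overrides lt X Y := by
  rw [← h.2] at hX
  by_contra hno
  exact hX.2 ⟨Y, hY, hYX, hno⟩

theorem Overrides.not_overrides {lt : Rule A → Rule A → Prop} {X Y : Set (Rule A)}
    (hwf : (X ∪ Y).WellFoundedOn lt) (hXY : Overrides lt X Y) : ¬ Overrides lt Y X := by
  intro hYX
  suffices h : ∀ r ∈ X ∪ Y, (r ∈ X → ¬ defeatsRule Y r) ∧ (r ∈ Y → ¬ defeatsRule X r) by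
    obtain ⟨r, hr, hd⟩ := hXY.1.2
    exact (h r (Or.inl hr)).1 hr hd
  intro r hr
  refine hwf.induction hr
    (P := fun r => (r ∈ X → ¬ defeatsRule Y r) ∧ (r ∈ Y → ¬ defeatsRule X r))
    fun s _ ih => ⟨fun hs hd => ?_, fun hs hd => ?_⟩
  · obtain ⟨t, ht, htd, hlt⟩ := hXY.2 s hs hd
    exact (ih t (Or.inr ht) hlt).2 ht htd
  · obtain ⟨t, ht, htd, hlt⟩ := hYX.2 s hs hd
    exact (ih t (Or.inl ht) hlt).1 ht htd

/-- every preferred stable fragment set of `(P,<)` is a stable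
fragment set of `P`. -/
theorem prefStableFragSet_is_stableFragSet (P : Set (Rule A)) (hP : P.Finite)
    (lt : Rule A → Rule A → Prop) (htrans : Transitive lt)
    (hasymm : ∀ r₁ r₂, lt r₁ r₂ → ¬ lt r₂ r₁)
    (E : Set (Set (Rule A))) (h : PrefStableFragSet lt P E) :
    StableFragSet P E := by
  have : IsStrictOrder (Rule A) lt :=
    { irrefl := fun r hr => hasymm r r hr hr, trans := htrans }
  refine ⟨h.1, ((fragReduct_subset_prefFragReduct lt P E).trans h.2.le).antisymm
    fun X hX => ⟨h.1 hX, ?_⟩⟩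
  rintro ⟨Y, hY, hYX⟩
  have hXY : Overrides lt X Y := h.overrides_of_defeatsSet hX hY hYX
  have hYX' : Overrides lt Y X := h.overrides_of_defeatsSet hY hX hXY.1.1
  have hwf : (X ∪ Y).WellFoundedOn lt :=
    (hP.subset (Set.union_subset (h.1 hX).1 (h.1 hY).1)).wellFoundedOn
  exact hXY.not_overrides hwf hYX'
end

section
/- There exists a stratified logic program P and a preference relation < on P such that P has an answer set but (P,<) has no GNO-preferred answer set. -/
variable {A : Type}

section Semantics

variable {P R : Set (Rule A)} {r : Rule A}

theorem MP_subset (P : Set (Rule A)) : MP P ⊆ P :=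
  Set.sInter_subset_of_mem ⟨subset_rfl, fun _ hr _ => hr⟩

theorem mem_MP_of_pos_eq_empty (hr : r ∈ P) (hpos : r.pos = ∅) : r ∈ MP P :=
  Set.mem_sInter.2 fun _ hR => hR.2 r hr (hpos ▸ Set.empty_subset _)

theorem MP_eq_self_of_pos_eq_empty (h : ∀ r ∈ P, r.pos = ∅) : MP P = P :=
  (MP_subset P).antisymm fun r hr => mem_MP_of_pos_eq_empty hr (h r hr)

theorem mem_reduct_of_neg_eq_empty (hr : r ∈ P) (hneg : r.neg = ∅) : r ∈ reduct P R :=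
  ⟨hr, fun ⟨_, _, hl⟩ => by rwa [hneg] at hl⟩

theorem GenSet.mem_of_neg_eq_empty (h : GenSet P R) (hr : r ∈ P) (hpos : r.pos = ∅)
    (hneg : r.neg = ∅) : r ∈ R :=
  h.2 ▸ mem_MP_of_pos_eq_empty (mem_reduct_of_neg_eq_empty hr hneg) hpos

theorem GenSet.notMem_of_defeatsRule (h : GenSet P R) (hd : defeatsRule R r) : r ∉ R :=
  fun hr => (MP_subset _ (h.2 ▸ hr : r ∈ MP (reduct P R))).2 hd

theorem Trules_eq_empty_of_forall_lt {lt : Rule A → Rule A → Prop}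
    (hlt : ∀ p ∈ R, lt p r) : Trules lt r R = ∅ :=
  Set.subset_empty_iff.1 <| (MP_subset _).trans fun p ⟨hp, hnlt⟩ => hnlt (hlt p hp)

theorem mem_gnoReduct_of_forall_lt {lt : Rule A → Rule A → Prop} (hr : r ∈ P)
    (hlt : ∀ p ∈ R, lt p r) : r ∈ gnoReduct lt P R :=
  ⟨hr, fun ⟨_, _, hl⟩ => by simp [Trules_eq_empty_of_forall_lt hlt, headSet] at hl⟩

theorem GNOPrefGen.mem_of_forall_lt {lt : Rule A → Rule A → Prop} (h : GNOPrefGen lt P R)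
    (hr : r ∈ P) (hpos : r.pos = ∅) (hlt : ∀ p ∈ R, lt p r) : r ∈ R :=
  h.2 ▸ mem_MP_of_pos_eq_empty (mem_gnoReduct_of_forall_lt hr hlt) hpos

end Semantics

/-! With atoms `a = 0` and `b = 1`, the program is `a ← not b` and `b ←`, where `b ←` is
preferred to `a ← not b`. Every generating set contains the fact `b ←` and hence not
`a ← not b`; but then all of its rules are preferred to `a ← not b`, so `T(a ← not b, R)` is
empty and the GNO reduct keeps `a ← not b`. -/

namespace GNOCounterexample

def ruleA : Rule ℕ := ⟨(true, 0), ∅, {(true, 1)}⟩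

def ruleB : Rule ℕ := ⟨(true, 1), ∅, ∅⟩

def prog : Set (Rule ℕ) := {ruleA, ruleB}

def pref (p q : Rule ℕ) : Prop := p = ruleB ∧ q = ruleA

theorem ruleA_ne_ruleB : ruleA ≠ ruleB := by
  simp [ruleA, ruleB]

theorem stratified_prog : Stratified prog :=
  ⟨fun l => if l = ruleB.head then 0 else 1, by
    rintro r (rfl | rfl) <;> simp [ruleA, ruleB]⟩

theorem transitive_pref : Transitive pref := by
  rintro _ _ _ ⟨rfl, rfl⟩ ⟨h, rfl⟩
  exact absurd h ruleA_ne_ruleB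

theorem pref_asymm (p q : Rule ℕ) (h : pref p q) : ¬ pref q p := by
  rintro ⟨rfl, -⟩
  exact ruleA_ne_ruleB h.2.symm

theorem defeatsRule_ruleA {R : Set (Rule ℕ)} (h : ruleB ∈ R) : defeatsRule R ruleA :=
  ⟨ruleB.head, ⟨ruleB, h, rfl⟩, rfl⟩

theorem genSet_ruleB : GenSet prog {ruleB} := by
  have hred : reduct prog {ruleB} = {ruleB} := by
    refine Set.Subset.antisymm ?_ ?_
    · rintro r ⟨rfl | rfl, hnd⟩
      · exact absurd (defeatsRule_ruleA (Set.mem_singleton _)) hnd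
      · rfl
    · rintro r rfl
      exact mem_reduct_of_neg_eq_empty (Or.inr rfl) rfl
  refine ⟨Set.singleton_subset_iff.2 (Or.inr rfl), ?_⟩
  rw [hred, MP_eq_self_of_pos_eq_empty]
  rintro r rfl
  rfl

theorem answerSet_prog : AnswerSet prog {(true, 1)} :=
  ⟨by simp [Consistent], {ruleB}, genSet_ruleB, by simp [headSet, ruleB]⟩

theorem not_GNOPrefGen (R : Set (Rule ℕ)) : ¬ GNOPrefGen pref prog R := by
  intro h
  have hB : ruleB ∈ R := h.1.mem_of_neg_eq_empty (Or.inr rfl) rfl rfl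
  have hA : ruleA ∉ R := h.1.notMem_of_defeatsRule (defeatsRule_ruleA hB)
  have hlt : ∀ p ∈ R, pref p ruleA := by
    intro p hp
    rcases h.1.1 hp with rfl | rfl
    · exact absurd hp hA
    · exact ⟨rfl, rfl⟩
  exact hA (h.mem_of_forall_lt (Or.inl rfl) rfl hlt)

end GNOCounterexample

open GNOCounterexample in
/-- there is a stratified program with an answer set but no
GNO-preferred answer set. -/
theorem exists_stratified_no_gnoPref :
    ∃ (P : Set (Rule ℕ)) (lt : Rule ℕ → Rule ℕ → Prop),
      P.Finite ∧ Stratified P ∧ Transitive lt ∧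
      (∀ r₁ r₂, lt r₁ r₂ → ¬ lt r₂ r₁) ∧
      (∃ S, AnswerSet P S) ∧
      ¬ ∃ S, GNOPrefAnswerSet lt P S :=
  ⟨prog, pref, (Set.finite_singleton ruleB).insert ruleA, stratified_prog, transitive_pref, pref_asymm,
    ⟨_, answerSet_prog⟩, fun ⟨_, _, R, hR, _⟩ => not_GNOPrefGen R hR⟩
end
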